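/- arXiv:1004.1916 — 3 statements merged into one kernel-verified Lean document; each statement's English description precedes it below -/
import Mathlib

section
/- Let T be a uniformly bounded C₀-semigroup on a Banach space X with ‖T_t‖ ≥ 1 for all t ≥ 0, and let h : ℝ≥0 → ℝ≥0 be a non-decreasing function with h(s) > 0 for s > 0. Then there exists x ∈ X such that ∫₀^∞ h(‖T_t x‖) dt = ∞. -/
/-!
Suppose every orbit integral were finite. Replacing `h` by its left limit `g ≤ h` makes
`x ↦ ∫ g(‖T_t x‖) dt` lower semicontinuous (Fatou), so by Baire it is bounded on some ball
`B(x₀, r)`; writing `z = (x₀ + z) - x₀` bounds `∫ g(‖T_t z‖ / 2) dt` uniformly for `‖z‖ < r`.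
But `‖T_n‖ ≥ 1` gives `‖z‖ < r` with `‖T_n z‖ > r / 2`, and `‖T_n z‖ ≤ C ‖T_s z‖` keeps
`‖T_s z‖` above `r / (2C)` for all `s < n`, so that integral is at least linear in `n`.
-/

open Filter MeasureTheory Function Set Topology
open scoped NNReal ENNReal

theorem Monotone.lowerSemicontinuous_leftLim {α β : Type*} [LinearOrder α] [TopologicalSpace α]
    [OrderTopology α] [ConditionallyCompleteLinearOrder β] [TopologicalSpace β] [OrderTopology β]
    {f : α → β} (hf : Monotone f) : LowerSemicontinuous (leftLim f) := by
  intro x y hy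
  rcases eq_or_neBot (𝓝[<] x) with hbot | hne
  · have hIci : Ici x ∈ 𝓝 x := by simpa only [compl_Iio] using inf_principal_eq_bot.1 hbot
    filter_upwards [hIci] with x' hx' using hy.trans_le (hf.leftLim hx')
  · have hIio : (f '' Iio x).Nonempty :=
      ((forall_mem_nonempty_iff_neBot.2 hne) _ self_mem_nhdsWithin).image f
    rw [hf.leftLim_eq_sSup] at hy
    obtain ⟨_, ⟨u, hu, rfl⟩, hyu⟩ := exists_lt_of_lt_csSup hIio hy
    filter_upwards [Ioi_mem_nhds hu] with x' hx' using hyu.trans_le (hf.le_leftLim hx')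

theorem lowerSemicontinuous_lintegral {X α : Type*} [TopologicalSpace X] [FirstCountableTopology X]
    [MeasurableSpace α] {μ : Measure α} {f : X → α → ℝ≥0∞}
    (hf : ∀ t, LowerSemicontinuous (f · t)) (hmeas : ∀ x, AEMeasurable (f x) μ) :
    LowerSemicontinuous fun x ↦ ∫⁻ t, f x t ∂μ := by
  intro x y hy
  by_contra hfreq
  obtain ⟨xs, hxs, hle⟩ := exists_seq_forall_of_frequently (not_eventually.1 hfreq)
  have hpt : ∀ t, f x t ≤ liminf (fun n ↦ f (xs n) t) atTop := fun t ↦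
    (le_liminf_iff).2 fun c hc ↦ hxs.eventually (hf t x c hc)
  have hxy : ∫⁻ t, f x t ∂μ ≤ y := calc
    ∫⁻ t, f x t ∂μ ≤ ∫⁻ t, liminf (fun n ↦ f (xs n) t) atTop ∂μ := lintegral_mono hpt
    _ ≤ liminf (fun n ↦ ∫⁻ t, f (xs n) t ∂μ) atTop := lintegral_liminf_le' fun n ↦ hmeas (xs n)
    _ ≤ y := liminf_le_of_frequently_le' (Frequently.of_forall fun n ↦ not_lt.1 (hle n))
  exact hxy.not_gt hy

theorem exists_nat_eventually_le_of_lowerSemicontinuous {X : Type*} [TopologicalSpace X]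
    [BaireSpace X] [Nonempty X] {Φ : X → ℝ≥0∞} (hΦ : LowerSemicontinuous Φ)
    (hfin : ∀ x, Φ x ≠ ∞) : ∃ x₀ : X, ∃ N : ℕ, ∀ᶠ x in 𝓝 x₀, Φ x ≤ N := by
  have hcover : ⋃ n : ℕ, Φ ⁻¹' Iic (n : ℝ≥0∞) = univ :=
    eq_univ_of_forall fun x ↦ mem_iUnion.2 ((ENNReal.exists_nat_gt (hfin x)).imp fun _ ↦ le_of_lt)
  obtain ⟨N, x₀, hx₀⟩ :=
    nonempty_interior_of_iUnion_of_closed (fun n : ℕ ↦ hΦ.isClosed_preimage n) hcover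
  exact ⟨x₀, N, mem_interior_iff_mem_nhds.1 hx₀⟩

theorem Monotone.apply_nnnorm_sub_div_two_le {E : Type*} [SeminormedAddCommGroup E]
    {g : ℝ≥0 → ℝ≥0} (hg : Monotone g) (a b : E) :
    g (‖a - b‖₊ / 2) ≤ g ‖a‖₊ + g ‖b‖₊ := by
  have hmax : ‖a - b‖₊ / 2 ≤ max ‖a‖₊ ‖b‖₊ := by
    rw [div_le_iff₀ two_pos, mul_two]
    exact (nnnorm_sub_le a b).trans (add_le_add (le_max_left _ _) (le_max_right _ _))
  calc g (‖a - b‖₊ / 2) ≤ max (g ‖a‖₊) (g ‖b‖₊) := hg.map_max ▸ hg hmax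
    _ ≤ g ‖a‖₊ + g ‖b‖₊ := max_le_add_of_nonneg bot_le bot_le

theorem ContinuousLinearMap.exists_norm_lt_and_half_lt_norm_apply {𝕜 E F : Type*} [RCLike 𝕜]
    [NormedAddCommGroup E] [NormedSpace 𝕜 E] [NormedAddCommGroup F] [NormedSpace 𝕜 F]
    (A : E →L[𝕜] F) (hA : 1 ≤ ‖A‖) {r : ℝ} (hr : 0 < r) : ∃ z, ‖z‖ < r ∧ r / 2 < ‖A z‖ := by
  obtain ⟨y, hy, hAy⟩ := A.exists_lt_apply_of_lt_opNorm (by linarith : (1 / 2 : ℝ) < ‖A‖)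
  refine ⟨(r : 𝕜) • y, ?_, ?_⟩ <;>
    simp only [map_smul, norm_smul, RCLike.norm_ofReal, abs_of_pos hr] <;> nlinarith

section Semigroup

variable {X : Type*} [NormedAddCommGroup X] [NormedSpace ℂ X] {T : ℝ → X →L[ℂ] X}

theorem norm_apply_le_mul_norm_apply
    (hTadd : ∀ s t : ℝ, 0 ≤ s → 0 ≤ t → T (s + t) = (T s).comp (T t))
    {C : ℝ} (hC : ∀ t : ℝ, 0 ≤ t → ‖T t‖ ≤ C) {s t : ℝ} (hs : 0 ≤ s) (hst : s ≤ t) (x : X) :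
    ‖T t x‖ ≤ C * ‖T s x‖ := calc
  ‖T t x‖ = ‖T (t - s) (T s x)‖ := by
    rw [← ContinuousLinearMap.comp_apply, ← hTadd _ _ (sub_nonneg.2 hst) hs, sub_add_cancel]
  _ ≤ ‖T (t - s)‖ * ‖T s x‖ := (T (t - s)).le_opNorm _
  _ ≤ C * ‖T s x‖ := mul_le_mul_of_nonneg_right (hC _ (sub_nonneg.2 hst)) (norm_nonneg _)

theorem exists_norm_lt_and_lt_lintegral_nnnorm_apply_comp
    (hTadd : ∀ s t : ℝ, 0 ≤ s → 0 ≤ t → T (s + t) = (T s).comp (T t))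
    {C : ℝ} (hC : ∀ t : ℝ, 0 ≤ t → ‖T t‖ ≤ C) (hT1 : ∀ t : ℝ, 0 ≤ t → 1 ≤ ‖T t‖)
    {g : ℝ≥0 → ℝ≥0} (hg : Monotone g) (hgpos : ∀ s, 0 < s → 0 < g s)
    {r : ℝ} (hr : 0 < r) {M : ℝ≥0∞} (hM : M ≠ ∞) :
    ∃ z : X, ‖z‖ < r ∧ M < ∫⁻ t in Ioi 0, (g ‖T t z‖₊ : ℝ≥0∞) := by
  have hC1 : 1 ≤ C := (hT1 0 le_rfl).trans (hC 0 le_rfl)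
  set ε : ℝ≥0 := ⟨r / (2 * C), by positivity⟩
  have hε : 0 < g ε := hgpos ε (show (0 : ℝ) < r / (2 * C) by positivity)
  obtain ⟨n, hn⟩ := ENNReal.exists_nat_mul_gt (ENNReal.coe_ne_zero.2 hε.ne') hM
  obtain ⟨z, hzr, hTz⟩ := (T n).exists_norm_lt_and_half_lt_norm_apply (hT1 n n.cast_nonneg) hr
  have hbound : ∀ s ∈ Ioo (0 : ℝ) n, (g ε : ℝ≥0∞) ≤ g ‖T s z‖₊ := by
    intro s hs
    have hrC : r / 2 < C * ‖T s z‖ :=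
      hTz.trans_le (norm_apply_le_mul_norm_apply hTadd hC hs.1.le hs.2.le z)
    have hεz : ε ≤ ‖T s z‖₊ := by
      change r / (2 * C) ≤ ‖T s z‖
      rw [div_le_iff₀ (by positivity)]
      linarith
    exact ENNReal.coe_le_coe.2 (hg hεz)
  refine ⟨z, hzr, hn.trans_le ?_⟩
  calc (n : ℝ≥0∞) * g ε = ∫⁻ _ in Ioo (0 : ℝ) n, (g ε : ℝ≥0∞) := by
        rw [setLIntegral_const, Real.volume_Ioo, sub_zero, ENNReal.ofReal_natCast, mul_comm]
    _ ≤ ∫⁻ s in Ioo (0 : ℝ) n, (g ‖T s z‖₊ : ℝ≥0∞) := setLIntegral_mono' measurableSet_Ioo hbound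
    _ ≤ ∫⁻ s in Ioi 0, (g ‖T s z‖₊ : ℝ≥0∞) := lintegral_mono_set Ioo_subset_Ioi_self

variable (hTcont : ∀ x : X, ContinuousOn (fun t ↦ T t x) (Ici 0))
include hTcont

theorem aemeasurable_nnnorm_apply_comp {g : ℝ≥0 → ℝ≥0} (hg : Monotone g) (x : X) :
    AEMeasurable (fun t ↦ (g ‖T t x‖₊ : ℝ≥0∞)) (volume.restrict (Ioi 0)) :=
  (measurable_coe_nnreal_ennreal.comp hg.measurable).comp_aemeasurable
    (((hTcont x).mono Ioi_subset_Ici_self).nnnorm.aemeasurable measurableSet_Ioi)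

theorem lowerSemicontinuous_lintegral_nnnorm_apply_comp {g : ℝ≥0 → ℝ≥0} (hg : Monotone g)
    (hg' : LowerSemicontinuous g) :
    LowerSemicontinuous fun x : X ↦ ∫⁻ t in Ioi 0, (g ‖T t x‖₊ : ℝ≥0∞) :=
  lowerSemicontinuous_lintegral
    (fun t ↦ ENNReal.continuous_coe.comp_lowerSemicontinuous
      (hg'.comp (continuous_nnnorm.comp (T t).continuous)) ENNReal.coe_mono)
    (aemeasurable_nnnorm_apply_comp hTcont hg)

theorem lintegral_nnnorm_apply_sub_div_two_le {g : ℝ≥0 → ℝ≥0} (hg : Monotone g) (x y : X) :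
    ∫⁻ t in Ioi 0, (g (‖T t (x - y)‖₊ / 2) : ℝ≥0∞)
      ≤ (∫⁻ t in Ioi 0, (g ‖T t x‖₊ : ℝ≥0∞)) + ∫⁻ t in Ioi 0, (g ‖T t y‖₊ : ℝ≥0∞) := by
  rw [← lintegral_add_left' (aemeasurable_nnnorm_apply_comp hTcont hg x)]
  refine lintegral_mono fun t ↦ ?_
  rw [map_sub, ← ENNReal.coe_add, ENNReal.coe_le_coe]
  exact hg.apply_nnnorm_sub_div_two_le (T t x) (T t y)

end Semigroup

theorem stmt_2_general {X : Type*} [NormedAddCommGroup X] [NormedSpace ℂ X] [CompleteSpace X]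
    (T : ℝ → X →L[ℂ] X)
    (hTadd : ∀ s t : ℝ, 0 ≤ s → 0 ≤ t → T (s + t) = (T s).comp (T t))
    (hTcont : ∀ x : X, ContinuousOn (fun t => T t x) (Set.Ici 0))
    (C : ℝ) (hC : ∀ t : ℝ, 0 ≤ t → ‖T t‖ ≤ C)
    (hT1 : ∀ t : ℝ, 0 ≤ t → 1 ≤ ‖T t‖)
    (h : ℝ≥0 → ℝ≥0) (hmono : Monotone h) (hpos : ∀ s : ℝ≥0, 0 < s → 0 < h s) :
    ∃ x : X, ∫⁻ t in Set.Ioi (0:ℝ), (h ‖T t x‖₊ : ℝ≥0∞) = ∞ := by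
  by_contra! hfin
  have hlim : Monotone (leftLim h) := hmono.leftLim
  set Φ : X → ℝ≥0∞ := fun x ↦ ∫⁻ t in Ioi 0, ((leftLim h ‖T t x‖₊ : ℝ≥0) : ℝ≥0∞)
  have hΦfin (x : X) : Φ x ≠ ∞ := ne_top_of_le_ne_top (hfin x) <|
    lintegral_mono fun t ↦ ENNReal.coe_le_coe.2 (hmono.leftLim_le le_rfl)
  obtain ⟨x₀, N, hN⟩ := exists_nat_eventually_le_of_lowerSemicontinuous
    (lowerSemicontinuous_lintegral_nnnorm_apply_comp hTcont hlim hmono.lowerSemicontinuous_leftLim)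
    hΦfin
  obtain ⟨r, hr, hball⟩ := Metric.eventually_nhds_iff.1 hN
  have hhalf : Monotone fun s ↦ leftLim h (s / 2) := fun a b hab ↦ hlim (by gcongr)
  have hhalf_pos (s : ℝ≥0) (hs : 0 < s) : 0 < leftLim h (s / 2) :=
    (hpos _ (by positivity)).trans_le (hmono.le_leftLim (NNReal.half_lt_self (by positivity)))
  obtain ⟨z, hz, hlt⟩ := exists_norm_lt_and_lt_lintegral_nnnorm_apply_comp hTadd hC hT1 hhalf
    hhalf_pos hr (M := N + N) (by simp)
  refine hlt.not_ge ?_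
  calc ∫⁻ t in Ioi 0, ((leftLim h (‖T t z‖₊ / 2) : ℝ≥0) : ℝ≥0∞) ≤ Φ (x₀ + z) + Φ x₀ := by
        simpa only [add_sub_cancel_left] using
          lintegral_nnnorm_apply_sub_div_two_le hTcont hlim (x₀ + z) x₀
    _ ≤ N + N := add_le_add (hball (by simpa [dist_eq_norm] using hz)) (hball (Metric.mem_ball_self hr))

/-- a uniformly bounded C₀-semigroup with `‖T_t‖ ≥ 1` for all `t ≥ 0`
admits, for every non-decreasing `h : ℝ≥0 → ℝ≥0` positive on positives, a vector `x`
with `∫₀^∞ h(‖T_t x‖) dt = ∞`. -/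
theorem stmt_2 {X : Type*} [NormedAddCommGroup X] [NormedSpace ℂ X] [CompleteSpace X]
    (T : ℝ → X →L[ℂ] X)
    (hT0 : T 0 = 1)
    (hTadd : ∀ s t : ℝ, 0 ≤ s → 0 ≤ t → T (s + t) = (T s).comp (T t))
    (hTcont : ∀ x : X, ContinuousOn (fun t => T t x) (Set.Ici 0))
    (C : ℝ) (hC : ∀ t : ℝ, 0 ≤ t → ‖T t‖ ≤ C)
    (hT1 : ∀ t : ℝ, 0 ≤ t → 1 ≤ ‖T t‖)
    (h : ℝ≥0 → ℝ≥0) (hmono : Monotone h) (hpos : ∀ s : ℝ≥0, 0 < s → 0 < h s) :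
    ∃ x : X, ∫⁻ t in Set.Ioi (0:ℝ), (h ‖T t x‖₊ : ℝ≥0∞) = ∞ :=
  stmt_2_general T hTadd hTcont C hC hT1 h hmono hpos
end

section
/- Let T be a C₀-semigroup on a Banach space X that is not uniformly bounded, i.e. sup_{t≥0} ‖T_t‖ = ∞. Then there exists x ∈ X such that the set {t ≥ 0 : ‖T_t x‖ > 1} has infinite Lebesgue measure. -/
/-!
By Banach–Steinhaus some orbit `t ↦ T t x` is unbounded, while `‖T s‖ ≤ C` for `s ∈ [0, 1]`.
Whenever `‖T t x‖ > C`, the factorisation `T t x = T (t - s) (T s x)` forces `‖T s x‖ > 1` on the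
whole interval `[t - 1, t]`. An orbit that is continuous, hence bounded on compacts, but unbounded
exceeds `C` at arbitrarily late times, so the set in question contains unit intervals beyond
every point and has infinite measure.
-/

open MeasureTheory Set
open scoped ENNReal

theorem bddAbove_norm_image_of_forall_bddAbove_norm_apply {𝕜 𝕜₂ E F ι : Type*}
    [NormedAddCommGroup E] [NormedAddCommGroup F] [NontriviallyNormedField 𝕜]
    [NontriviallyNormedField 𝕜₂] [NormedSpace 𝕜 E] [NormedSpace 𝕜₂ F] {σ : 𝕜 →+* 𝕜₂}
    [RingHomIsometric σ] [CompleteSpace E] (g : ι → E →SL[σ] F) (s : Set ι)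
    (h : ∀ x, BddAbove ((fun i => ‖g i x‖) '' s)) : BddAbove ((fun i => ‖g i‖) '' s) := by
  obtain ⟨C, hC⟩ := banach_steinhaus (g := fun i : s => g i) fun x => by
    obtain ⟨C, hC⟩ := h x
    exact ⟨C, fun i => hC (mem_image_of_mem _ i.2)⟩
  exact ⟨C, forall_mem_image.2 fun i hi => hC ⟨i, hi⟩⟩

theorem volume_eq_top_of_forall_exists_Icc_subset {S : Set ℝ}
    (h : ∀ N, ∃ u, N ≤ u ∧ Icc u (u + 1) ⊆ S) : volume S = ∞ := by
  have key : ∀ n : ℕ, ∀ N : ℝ, (n : ℝ≥0∞) ≤ volume (S ∩ Ici N) := by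
    intro n
    induction n with
    | zero => simp
    | succ n ih =>
      intro N
      obtain ⟨u, hNu, hu⟩ := h N
      have hdisj : Disjoint (Icc u (u + 1)) (S ∩ Ici (u + 2)) :=
        disjoint_left.2 fun t ht ht' => by linarith [ht.2, ht'.2.out]
      calc ((n + 1 : ℕ) : ℝ≥0∞) = volume (Icc u (u + 1)) + n := by
            simp [Real.volume_Icc, add_comm]
        _ ≤ volume (Icc u (u + 1)) + volume (S ∩ Ici (u + 2)) := by gcongr; exact ih _
        _ = volume (Icc u (u + 1) ∪ (S ∩ Ici (u + 2))) :=
            (measure_union' hdisj measurableSet_Icc).symm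
        _ ≤ volume (S ∩ Ici N) := measure_mono <| union_subset
            (subset_inter hu fun t ht => hNu.trans ht.1)
            (inter_subset_inter_right _ (Ici_subset_Ici.2 (by linarith)))
  refine ENNReal.eq_top_of_forall_nnreal_le fun r => ?_
  obtain ⟨n, hn⟩ := exists_nat_ge r
  calc (r : ℝ≥0∞) ≤ n := by exact_mod_cast hn
    _ ≤ volume (S ∩ Ici 0) := key n 0
    _ ≤ volume S := measure_mono inter_subset_left

theorem exists_gt_lt_of_not_bddAbove_of_continuousOn {f : ℝ → ℝ} (hf : ContinuousOn f (Ici 0))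
    (hunb : ¬BddAbove (f '' Ici 0)) (M N : ℝ) : ∃ t, N < t ∧ M < f t := by
  obtain ⟨K, hK⟩ := (isCompact_Icc (a := 0) (b := N)).bddAbove_image (hf.mono Icc_subset_Ici_self)
  obtain ⟨_, ⟨t, ht0, rfl⟩, hlt⟩ := not_bddAbove_iff.1 hunb (max K M)
  refine ⟨t, lt_of_not_ge fun htN => ?_, (le_max_right K M).trans_lt hlt⟩
  exact (hK (mem_image_of_mem f ⟨ht0, htN⟩)).not_gt ((le_max_left K M).trans_lt hlt)

section Semigroup

variable {𝕜 X : Type*} [NontriviallyNormedField 𝕜] [NormedAddCommGroup X] [NormedSpace 𝕜 X]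
  {T : ℝ → X →L[𝕜] X}

theorem one_lt_norm_apply_of_lt_norm_apply
    (hTadd : ∀ s t : ℝ, 0 ≤ s → 0 ≤ t → T (s + t) = (T s).comp (T t)) {C : ℝ}
    (hC : ∀ s ∈ Icc (0 : ℝ) 1, ‖T s‖ ≤ C) {x : X} {t s : ℝ} (ht : C < ‖T t x‖) (hs0 : 0 ≤ s)
    (hs : s ∈ Icc (t - 1) t) : 1 < ‖T s x‖ := by
  have hts : t - s ∈ Icc (0 : ℝ) 1 := ⟨by linarith [hs.2], by linarith [hs.1]⟩
  have hsplit : T t x = T (t - s) (T s x) := by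
    rw [← (T (t - s)).comp_apply, ← hTadd _ _ hts.1 hs0, sub_add_cancel]
  by_contra! hle
  refine ht.not_ge ?_
  calc ‖T t x‖ ≤ ‖T (t - s)‖ * ‖T s x‖ := hsplit ▸ (T (t - s)).le_opNorm _
    _ ≤ ‖T (t - s)‖ := mul_le_of_le_one_right (norm_nonneg _) hle
    _ ≤ C := hC _ hts

end Semigroup

theorem stmt_3_general {X : Type*} [NormedAddCommGroup X] [NormedSpace ℂ X] [CompleteSpace X]
    (T : ℝ → X →L[ℂ] X)
    (hTadd : ∀ s t : ℝ, 0 ≤ s → 0 ≤ t → T (s + t) = (T s).comp (T t))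
    (hTcont : ∀ x : X, ContinuousOn (fun t => T t x) (Set.Ici 0))
    (hunb : ∀ M : ℝ, ∃ t : ℝ, 0 ≤ t ∧ M < ‖T t‖) :
    ∃ x : X, volume {t : ℝ | 0 ≤ t ∧ 1 < ‖T t x‖} = ∞ := by
  obtain ⟨x, hx⟩ : ∃ x, ¬BddAbove ((fun t => ‖T t x‖) '' Ici 0) := by
    by_contra! hbdd
    refine not_bddAbove_iff.2 (fun M => ?_) (bddAbove_norm_image_of_forall_bddAbove_norm_apply T _ hbdd)
    obtain ⟨t, ht0, hlt⟩ := hunb M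
    exact ⟨_, mem_image_of_mem _ ht0, hlt⟩
  obtain ⟨C, hC⟩ := bddAbove_norm_image_of_forall_bddAbove_norm_apply T (Icc 0 1) fun y =>
    isCompact_Icc.bddAbove_image ((hTcont y).norm.mono Icc_subset_Ici_self)
  refine ⟨x, volume_eq_top_of_forall_exists_Icc_subset fun N => ?_⟩
  obtain ⟨t, hNt, ht⟩ :=
    exists_gt_lt_of_not_bddAbove_of_continuousOn (hTcont x).norm hx C (max N 0 + 1)
  refine ⟨t - 1, by linarith [le_max_left N 0], fun s hs => ?_⟩
  have hs0 : 0 ≤ s := by linarith [hs.1, le_max_right N 0]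
  exact ⟨hs0, one_lt_norm_apply_of_lt_norm_apply hTadd (forall_mem_image.1 hC) ht hs0
    (by simpa using hs)⟩

/-- an unbounded C₀-semigroup has an orbit staying above `1` in norm on a
set of infinite Lebesgue measure. -/
theorem stmt_3 {X : Type*} [NormedAddCommGroup X] [NormedSpace ℂ X] [CompleteSpace X]
    (T : ℝ → X →L[ℂ] X)
    (hT0 : T 0 = 1)
    (hTadd : ∀ s t : ℝ, 0 ≤ s → 0 ≤ t → T (s + t) = (T s).comp (T t))
    (hTcont : ∀ x : X, ContinuousOn (fun t => T t x) (Set.Ici 0))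
    (hunb : ∀ M : ℝ, ∃ t : ℝ, 0 ≤ t ∧ M < ‖T t‖) :
    ∃ x : X, volume {t : ℝ | 0 ≤ t ∧ 1 < ‖T t x‖} = ∞ :=
  stmt_3_general T hTadd hTcont hunb
end

section
/- Let T be a C₀-semigroup with generator A on a Banach space X, and suppose s₀(A) = 0 (the abscissa of uniform boundedness of the resolvent is 0). Then for every δ > 0 and every t₀ < ∞ there exist β ∈ ℝ and y ∈ D(A) with ‖y‖ = 1 such that ‖T_t y − e^{iβt} y‖ < δ for all t ∈ [0, t₀]. -/
/-!
If the resolvent were bounded on some strip `0 < Re λ ≤ ε`, then together with its bound on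
`Re λ > ε` it would be bounded by some `M` on all of `Re λ > 0`, and the Neumann series
`R(λ) = R(μ) (1 - (μ - λ) R(μ))⁻¹` would extend the bound `2M` to `Re λ > -1/(2M)`, contradicting
`s₀(A) = 0`. So there are `λ = α + iβ` with `α` small and `‖R(λ)‖` large, and normalising `R(λ) x`
for an `x` on which `R(λ)` nearly attains its norm gives a unit vector `y ∈ D(A)` with
`‖(A - iβ) y‖` small. The function `t ↦ e^{-iβt} T_t y` has right derivative
`e^{-iβt} T_t (A - iβ) y`, of norm at most `C ‖(A - iβ) y‖` on `[0, t₀]` by Banach–Steinhaus,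
and the mean value inequality bounds `‖T_t y - e^{iβt} y‖` by `C t₀ ‖(A - iβ) y‖`.
-/

open Filter

/-- The resolvent `(λ − A)⁻¹` of the operator `A` (with domain `D`) exists and is
uniformly bounded on the half-plane `Re λ > ω`.  The abscissa `s₀(A)` of uniform
boundedness of the resolvent is the infimum of the set of such `ω`. -/
def ResolventUnifBdd {X : Type*} [NormedAddCommGroup X] [NormedSpace ℂ X]
    (D : Set X) (A : X → X) (ω : ℝ) : Prop :=
  ∃ M : ℝ, ∀ lam : ℂ, ω < lam.re → ∃ R : X →L[ℂ] X, ‖R‖ ≤ M ∧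
    (∀ x : X, R x ∈ D ∧ lam • R x - A (R x) = x) ∧
    (∀ x ∈ D, R (lam • x - A x) = x)

open Set Topology

theorem IsCompact.exists_bound_of_continuousOn_apply {α 𝕜 E F : Type*} [TopologicalSpace α]
    [NontriviallyNormedField 𝕜] [NormedAddCommGroup E] [NormedSpace 𝕜 E] [CompleteSpace E]
    [NormedAddCommGroup F] [NormedSpace 𝕜 F] {T : α → E →L[𝕜] F} {K : Set α}
    (hK : IsCompact K) (hT : ∀ x, ContinuousOn (fun t => T t x) K) :
    ∃ C, ∀ t ∈ K, ‖T t‖ ≤ C := by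
  obtain ⟨C, hC⟩ := banach_steinhaus (g := fun t : K => T t) fun x => by
    obtain ⟨B, hB⟩ := hK.exists_bound_of_continuousOn (hT x)
    exact ⟨B, fun t => hB t t.2⟩
  exact ⟨C, fun t ht => hC ⟨t, ht⟩⟩

section Resolvent

variable {X : Type*} [NormedAddCommGroup X] [NormedSpace ℂ X]

def IsResolvent (D : Set X) (A : X → X) (lam : ℂ) (R : X →L[ℂ] X) : Prop :=
  (∀ x : X, R x ∈ D ∧ lam • R x - A (R x) = x) ∧ ∀ x ∈ D, R (lam • x - A x) = x

variable {D : Set X} {A : X → X}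

theorem IsResolvent.exists_of_norm_sub_mul_lt_one [CompleteSpace X] {μ lam : ℂ}
    {R : X →L[ℂ] X} (hR : IsResolvent D A μ R) (h : ‖μ - lam‖ * ‖R‖ < 1) :
    ∃ R' : X →L[ℂ] X, ‖R'‖ ≤ ‖R‖ / (1 - ‖μ - lam‖ * ‖R‖) ∧ IsResolvent D A lam R' := by
  set a : X →L[ℂ] X := (μ - lam) • R
  have ha : ‖a‖ ≤ ‖μ - lam‖ * ‖R‖ := norm_smul_le (μ - lam) R
  let u := Units.oneSub a (ha.trans_lt h)
  set S : X →L[ℂ] X := ↑u⁻¹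
  have hcomm : Commute R S :=
    Commute.units_inv_right <| (Commute.one_right R).sub_right ((Commute.refl R).smul_right _)
  have hlam : ∀ z, lam • z - A z = (μ • z - A z) - (μ - lam) • z := fun z => by
    rw [sub_smul]; abel
  have hu : ∀ z, (u : X →L[ℂ] X) z = z - (μ - lam) • R z := fun z => rfl
  refine ⟨R * S, ?_, ⟨fun x => ?_, fun x hx => ?_⟩⟩
  · have hu_inv : ‖S‖ ≤ (1 - ‖a‖)⁻¹ := by
      have hgeom : ‖S‖ ≤ ‖(1 : X →L[ℂ] X)‖ - 1 + (1 - ‖a‖)⁻¹ :=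
        tsum_geometric_le_of_norm_lt_one a (ha.trans_lt h)
      have hone : ‖(1 : X →L[ℂ] X)‖ ≤ 1 := ContinuousLinearMap.norm_id_le
      linarith
    calc ‖R * S‖ ≤ ‖R‖ * (1 - ‖a‖)⁻¹ := (norm_mul_le _ _).trans (by gcongr)
      _ ≤ ‖R‖ * (1 - ‖μ - lam‖ * ‖R‖)⁻¹ := by gcongr
      _ = _ := (div_eq_mul_inv _ _).symm
  · obtain ⟨hmem, heq⟩ := hR.1 (S x)
    refine ⟨hmem, ?_⟩
    calc lam • R (S x) - A (R (S x)) = (u : X →L[ℂ] X) (S x) := by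
          rw [hlam, heq, hu]
      _ = x := by rw [← mul_apply_eq_comp, u.mul_inv, one_apply_eq_self]
  · calc (R * S) (lam • x - A x) = S (R (lam • x - A x)) := by
          rw [hcomm.eq, mul_apply_eq_comp]
      _ = S ((u : X →L[ℂ] X) x) := by rw [hlam, map_sub, hR.2 x hx, map_smul, hu]
      _ = x := by rw [← mul_apply_eq_comp, u.inv_mul, one_apply_eq_self]

theorem resolventUnifBdd_of_forall_re_pos [CompleteSpace X] {M : ℝ} (hM : 0 < M)
    (h : ∀ lam : ℂ, 0 < lam.re → ∃ R : X →L[ℂ] X, ‖R‖ ≤ M ∧ IsResolvent D A lam R) :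
    ResolventUnifBdd D A (-(2 * M)⁻¹) := by
  refine ⟨2 * M, fun lam hlam => ?_⟩
  have hμ : 0 < (lam + ((2 * M)⁻¹ : ℝ)).re := by
    rw [Complex.add_re, Complex.ofReal_re]
    exact neg_lt_iff_pos_add.1 hlam
  obtain ⟨R, hRM, hR⟩ := h _ hμ
  have hq : ‖lam + ((2 * M)⁻¹ : ℝ) - lam‖ * ‖R‖ ≤ 1 / 2 := by
    rw [add_sub_cancel_left, Complex.norm_real, Real.norm_of_nonneg (by positivity)]
    calc (2 * M)⁻¹ * ‖R‖ ≤ (2 * M)⁻¹ * M := by gcongr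
      _ = 1 / 2 := by field_simp
  obtain ⟨R', hR'R, hR'⟩ := hR.exists_of_norm_sub_mul_lt_one (hq.trans_lt (by norm_num))
  refine ⟨R', ?_, hR'⟩
  calc ‖R'‖ ≤ ‖R‖ / (1 - 1 / 2) := hR'R.trans (by gcongr)
    _ ≤ 2 * M := by norm_num; linarith

theorem exists_isResolvent_norm_gt [CompleteSpace X]
    (hs0_lower : ∀ ω : ℝ, ω < 0 → ¬ ResolventUnifBdd D A ω)
    (hs0_upper : ∀ ω : ℝ, 0 < ω → ResolventUnifBdd D A ω) {ε : ℝ} (hε : 0 < ε) (K : ℝ) :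
    ∃ lam R, 0 < lam.re ∧ lam.re ≤ ε ∧ IsResolvent D A lam R ∧ K < ‖R‖ := by
  by_contra! hK
  obtain ⟨M, hM⟩ := hs0_upper ε hε
  refine hs0_lower _ (neg_lt_zero.2 (by positivity))
    (resolventUnifBdd_of_forall_re_pos (M := max (max M K) 1) (by positivity) fun lam hlam => ?_)
  rcases le_or_gt lam.re ε with hlamε | hεlam
  · obtain ⟨M', hM'⟩ := hs0_upper (lam.re / 2) (by positivity)
    obtain ⟨R, -, hR⟩ := hM' lam (by linarith)
    exact ⟨R, (hK lam R hlam hlamε hR).trans (le_max_of_le_left (le_max_right M K)), hR⟩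
  · obtain ⟨R, hRM, hR⟩ := hM lam hεlam
    exact ⟨R, hRM.trans (le_max_of_le_left (le_max_left M K)), hR⟩

theorem IsResolvent.exists_norm_eq_one_norm_smul_sub_le {lam : ℂ} {R : X →L[ℂ] X}
    (hR : IsResolvent D A lam R) {K : ℝ} (hK : 0 < K) (hRK : K < ‖R‖) :
    ∃ y ∈ D, ‖y‖ = 1 ∧ ‖lam • y - A y‖ ≤ K⁻¹ := by
  obtain ⟨x, hx⟩ : ∃ x, K * ‖x‖ < ‖R x‖ := by
    by_contra! h
    exact hRK.not_ge (R.opNorm_le_bound hK.le h)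
  have hRx : 0 < ‖R x‖ := (by positivity : 0 ≤ K * ‖x‖).trans_lt hx
  set c : ℂ := ((‖R x‖⁻¹ : ℝ) : ℂ)
  have hc : ‖c‖ = ‖R x‖⁻¹ := by rw [Complex.norm_real, Real.norm_of_nonneg (by positivity)]
  obtain ⟨hmem, heq⟩ := hR.1 (c • x)
  refine ⟨R (c • x), hmem, ?_, ?_⟩
  · rw [map_smul, norm_smul, hc, inv_mul_cancel₀ hRx.ne']
  · rw [heq, norm_smul, hc, inv_mul_le_iff₀ hRx, ← div_eq_mul_inv, le_div_iff₀ hK]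
    linarith

theorem exists_norm_eq_one_norm_sub_I_smul_le [CompleteSpace X]
    (hs0_lower : ∀ ω : ℝ, ω < 0 → ¬ ResolventUnifBdd D A ω)
    (hs0_upper : ∀ ω : ℝ, 0 < ω → ResolventUnifBdd D A ω) {ε : ℝ} (hε : 0 < ε) :
    ∃ β : ℝ, ∃ y ∈ D, ‖y‖ = 1 ∧ ‖A y - (Complex.I * β) • y‖ ≤ ε := by
  obtain ⟨lam, R, hre, hreε, hR, hRK⟩ :=
    exists_isResolvent_norm_gt hs0_lower hs0_upper (half_pos hε) (2 / ε)
  obtain ⟨y, hyD, hy1, hy⟩ := hR.exists_norm_eq_one_norm_smul_sub_le (by positivity) hRK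
  refine ⟨lam.im, y, hyD, hy1, ?_⟩
  have hsplit : A y - (Complex.I * lam.im) • y = (lam.re : ℂ) • y - (lam • y - A y) := by
    have hlam : lam • y = (lam.re : ℂ) • y + (Complex.I * lam.im) • y := by
      rw [← add_smul, mul_comm, Complex.re_add_im]
    rw [hlam]
    abel
  calc ‖A y - (Complex.I * lam.im) • y‖ ≤ ‖(lam.re : ℂ) • y‖ + ‖lam • y - A y‖ :=
        hsplit ▸ norm_sub_le _ _
    _ ≤ ε / 2 + ε / 2 := by
        rw [norm_smul, hy1, mul_one, Complex.norm_real, Real.norm_of_nonneg hre.le]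
        gcongr
        simpa using hy
    _ = ε := add_halves ε

end Resolvent

section Semigroup

variable {X : Type*} [NormedAddCommGroup X] [NormedSpace ℂ X] {T : ℝ → X →L[ℂ] X}

theorem hasDerivWithinAt_semigroup_apply
    (hTadd : ∀ s t : ℝ, 0 ≤ s → 0 ≤ t → T (s + t) = (T s).comp (T t)) {x v : X}
    (hx : Tendsto (fun h : ℝ => h⁻¹ • (T h x - x)) (𝓝[>] 0) (𝓝 v)) {t : ℝ} (ht : 0 ≤ t) :
    HasDerivWithinAt (fun s => T s x) (T t v) (Ici t) t := by
  rw [hasDerivWithinAt_iff_tendsto_slope, Ici_sdiff_left]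
  have hshift : Tendsto (fun s => s - t) (𝓝[>] t) (𝓝[>] 0) := by
    refine tendsto_nhdsWithin_of_tendsto_nhds_of_eventually_within _ ?_ ?_
    · simpa using ((continuous_sub_right t).tendsto t).mono_left nhdsWithin_le_nhds
    · exact eventually_nhdsWithin_of_forall fun s hs => mem_Ioi.2 (sub_pos.2 hs)
  refine (((T t).continuous.tendsto v).comp (hx.comp hshift)).congr' ?_
  filter_upwards [self_mem_nhdsWithin] with s hs
  simp only [Function.comp_apply, slope_def_module]
  rw [ContinuousLinearMap.map_smul_of_tower, map_sub, ← ContinuousLinearMap.comp_apply,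
    ← hTadd t (s - t) ht (sub_pos.2 hs).le, add_sub_cancel]

theorem norm_semigroup_apply_sub_exp_smul_le (hT0 : T 0 = 1)
    (hTadd : ∀ s t : ℝ, 0 ≤ s → 0 ≤ t → T (s + t) = (T s).comp (T t)) {y v : X}
    (hy : Tendsto (fun h : ℝ => h⁻¹ • (T h y - y)) (𝓝[>] 0) (𝓝 v)) {t₁ C : ℝ}
    (hcont : ContinuousOn (fun t => T t y) (Icc 0 t₁)) (hC : ∀ t ∈ Icc 0 t₁, ‖T t‖ ≤ C)
    (β : ℝ) {t : ℝ} (ht : t ∈ Icc 0 t₁) :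
    ‖T t y - Complex.exp (Complex.I * (β * t)) • y‖ ≤ C * ‖v - (Complex.I * β) • y‖ * t := by
  set w := v - (Complex.I * β) • y
  set c : ℂ := -(Complex.I * β)
  have hnorm : ∀ s : ℝ, ‖Complex.exp (c * s)‖ = 1 := fun s => by simp [c, Complex.norm_exp]
  have hexp : ∀ s : ℝ, HasDerivAt (fun s : ℝ => Complex.exp (c * s)) (Complex.exp (c * s) * c) s :=
    fun s => by simpa using ((Complex.ofRealCLM.hasDerivAt (x := s)).const_mul c).cexp
  set f : ℝ → X := fun s => Complex.exp (c * s) • T s y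
  have hf' : ∀ s ∈ Ico 0 t₁,
      HasDerivWithinAt f (Complex.exp (c * s) • T s w) (Ici s) s := fun s hs => by
    refine ((hexp s).hasDerivWithinAt.smul
      (hasDerivWithinAt_semigroup_apply hTadd hy hs.1)).congr_deriv ?_
    rw [map_sub, map_smul, smul_sub, smul_smul, mul_neg, neg_smul, sub_eq_add_neg]
  have hbound : ∀ s ∈ Ico 0 t₁, ‖Complex.exp (c * s) • T s w‖ ≤ C * ‖w‖ := fun s hs => by
    rw [norm_smul, hnorm, one_mul]
    exact (T s).le_of_opNorm_le (hC s (Ico_subset_Icc_self hs)) w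
  have hf : ContinuousOn f (Icc 0 t₁) := by fun_prop
  have hmvt := norm_image_sub_le_of_norm_deriv_right_le_segment hf hf' hbound t ht
  have hf0 : f 0 = y := by simp [f, hT0]
  have hphase : Complex.exp (Complex.I * (β * t)) * Complex.exp (c * t) = 1 := by
    rw [← Complex.exp_add, ← Complex.exp_zero]
    congr 1
    simp only [c]
    ring
  calc ‖T t y - Complex.exp (Complex.I * (β * t)) • y‖
        = ‖Complex.exp (Complex.I * (β * t)) • (f t - f 0)‖ := by
          rw [hf0, smul_sub, smul_smul, hphase, one_smul]
    _ = ‖f t - f 0‖ := by simp [norm_smul, Complex.norm_exp]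
    _ ≤ C * ‖w‖ * t := by simpa using hmvt

end Semigroup

theorem stmt_5_general {X : Type*} [NormedAddCommGroup X] [NormedSpace ℂ X] [CompleteSpace X]
    (T : ℝ → X →L[ℂ] X)
    (hT0 : T 0 = 1)
    (hTadd : ∀ s t : ℝ, 0 ≤ s → 0 ≤ t → T (s + t) = (T s).comp (T t))
    (hTcont : ∀ x : X, ContinuousOn (fun t => T t x) (Set.Ici 0))
    (D : Set X) (A : X → X)
    (hgen : ∀ x ∈ D, Tendsto (fun h : ℝ => h⁻¹ • (T h x - x))
      (nhdsWithin 0 (Set.Ioi 0)) (nhds (A x)))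
    (hs0_lower : ∀ ω : ℝ, ω < 0 → ¬ ResolventUnifBdd D A ω)
    (hs0_upper : ∀ ω : ℝ, 0 < ω → ResolventUnifBdd D A ω) :
    ∀ δ : ℝ, 0 < δ → ∀ t₀ : ℝ, ∃ β : ℝ, ∃ y ∈ D, ‖y‖ = 1 ∧
      ∀ t ∈ Set.Icc (0:ℝ) t₀, ‖T t y - Complex.exp (Complex.I * (β * t)) • y‖ < δ := by
  intro δ hδ t₀
  set t₁ := max t₀ 0
  obtain ⟨C, hC⟩ := (isCompact_Icc (a := 0) (b := t₁)).exists_bound_of_continuousOn_apply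
    fun x => (hTcont x).mono Icc_subset_Ici_self
  have hC0 : 0 ≤ C := (norm_nonneg _).trans (hC 0 ⟨le_rfl, le_max_right _ _⟩)
  set ε := δ / (C * t₁ + 1)
  have hCε : C * t₁ * ε < δ := by
    rw [← mul_div_assoc, div_lt_iff₀ (by positivity)]
    nlinarith
  obtain ⟨β, y, hyD, hy1, hAy⟩ := exists_norm_eq_one_norm_sub_I_smul_le hs0_lower hs0_upper
    (show 0 < ε by positivity)
  refine ⟨β, y, hyD, hy1, fun t ht => ?_⟩
  have ht₁ : t ∈ Icc 0 t₁ := ⟨ht.1, ht.2.trans (le_max_left _ _)⟩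
  calc ‖T t y - Complex.exp (Complex.I * (β * t)) • y‖ ≤ C * ‖A y - (Complex.I * β) • y‖ * t :=
        norm_semigroup_apply_sub_exp_smul_le hT0 hTadd (hgen y hyD)
          ((hTcont y).mono Icc_subset_Ici_self) hC β ht₁
    _ ≤ C * ε * t₁ := by gcongr; exacts [ht.1, ht₁.2]
    _ < δ := by linarith

/-- Lemma 1: if `s₀(A) = 0` then for every `δ > 0` and `t₀ < ∞` there are
`β ∈ ℝ` and a unit vector `y ∈ D(A)` with `‖T_t y − e^{iβt} y‖ < δ` on `[0, t₀]`. -/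
theorem stmt_5 {X : Type*} [NormedAddCommGroup X] [NormedSpace ℂ X] [CompleteSpace X]
    (T : ℝ → X →L[ℂ] X)
    (hT0 : T 0 = 1)
    (hTadd : ∀ s t : ℝ, 0 ≤ s → 0 ≤ t → T (s + t) = (T s).comp (T t))
    (hTcont : ∀ x : X, ContinuousOn (fun t => T t x) (Set.Ici 0))
    (D : Set X) (A : X → X)
    (hgen : ∀ x ∈ D, Tendsto (fun h : ℝ => h⁻¹ • (T h x - x))
      (nhdsWithin 0 (Set.Ioi 0)) (nhds (A x)))
    (hmax : ∀ x : X, (∃ l : X, Tendsto (fun h : ℝ => h⁻¹ • (T h x - x))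
      (nhdsWithin 0 (Set.Ioi 0)) (nhds l)) → x ∈ D)
    (hs0_lower : ∀ ω : ℝ, ω < 0 → ¬ ResolventUnifBdd D A ω)
    (hs0_upper : ∀ ω : ℝ, 0 < ω → ResolventUnifBdd D A ω) :
    ∀ δ : ℝ, 0 < δ → ∀ t₀ : ℝ, ∃ β : ℝ, ∃ y ∈ D, ‖y‖ = 1 ∧
      ∀ t ∈ Set.Icc (0:ℝ) t₀, ‖T t y - Complex.exp (Complex.I * (β * t)) • y‖ < δ :=
  stmt_5_general T hT0 hTadd hTcont D A hgen hs0_lower hs0_upper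
end
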